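/- arXiv:0910.5816 — 4 statements merged into one kernel-verified Lean document; each statement's English description precedes it below -/
import Mathlib

section
/- Let H be a finite set and φ : 2^H → Φ a function into a linearly ordered set with minimum -∞, satisfying monotonicity (F ⊆ G implies φ(F) ≤ φ(G)) and locality (if F ⊆ G ⊆ H with -∞ < φ(F) = φ(G), then for all h ∈ H, φ(G) < φ(G ∪ {h}) implies φ(F) < φ(F ∪ {h})). Then for any subsets F, G ⊆ H, φ(F ∪ G) > φ(F) if and only if there exists g ∈ G such that φ(F ∪ {g}) > φ(F). -/
/-!
If no single `g ∈ G` raises `φ F`, locality transports this from `F` to every `F ∪ s` with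
`s ⊆ G` having the same value, so adding the elements of `G` one at a time never raises the
value and `φ (F ∪ G) = φ F`.
-/

open Finset

def IsLocal {α Φ : Type*} [DecidableEq α] [LinearOrder Φ] [OrderBot Φ]
    (H : Finset α) (φ : Finset α → Φ) : Prop :=
  ∀ F G : Finset α, F ⊆ G → G ⊆ H → ⊥ < φ F → φ F = φ G →
    ∀ h ∈ H, φ G < φ (insert h G) → φ F < φ (insert h F)

namespace IsLocal

variable {α Φ : Type*} [DecidableEq α] [LinearOrder Φ] [OrderBot Φ]
  {H F G : Finset α} {φ : Finset α → Φ}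

theorem apply_insert_eq (hloc : IsLocal H φ) (hmono : Monotone φ) (hFG : F ⊆ G) (hGH : G ⊆ H)
    (hbot : ⊥ < φ F) (heq : φ F = φ G) {h : α} (hh : h ∈ H) (hFh : φ (insert h F) ≤ φ F) :
    φ (insert h G) = φ G :=
  le_antisymm (not_lt.1 fun hlt => hFh.not_gt (hloc F G hFG hGH hbot heq h hh hlt))
    (hmono (subset_insert h G))

theorem apply_union_eq (hloc : IsLocal H φ) (hmono : Monotone φ) (hF : F ⊆ H) (hG : G ⊆ H)
    (hbot : ⊥ < φ F) (hno : ∀ g ∈ G, φ (insert g F) ≤ φ F) : φ (F ∪ G) = φ F := by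
  refine Finset.induction_on' (motive := fun s => φ (F ∪ s) = φ F) G (by rw [union_empty]) ?_
  intro a s ha hs _ ih
  rw [union_insert, hloc.apply_insert_eq hmono subset_union_left
    (union_subset hF (hs.trans hG)) hbot ih.symm (hG ha) (hno a ha), ih]

end IsLocal

/-- Lemma (locality consequence): for an abstract optimization program,
`φ(F ∪ G) > φ(F)` iff some `g ∈ G` has `φ(F ∪ {g}) > φ(F)`. -/
theorem abstract_program_locality_union
    {α : Type*} [DecidableEq α] {Φ : Type*} [LinearOrder Φ] [OrderBot Φ]
    (H : Finset α) (φ : Finset α → Φ)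
    (hmono : ∀ F G : Finset α, F ⊆ G → φ F ≤ φ G)
    (hloc : ∀ F G : Finset α, F ⊆ G → G ⊆ H → ⊥ < φ F → φ F = φ G →
      ∀ h ∈ H, φ G < φ (insert h G) → φ F < φ (insert h F))
    (F G : Finset α) (hF : F ⊆ H) (hG : G ⊆ H) (hfin : ⊥ < φ F) :
    φ F < φ (F ∪ G) ↔ ∃ g ∈ G, φ F < φ (insert g F) := by
  have hmono' : Monotone φ := fun _ _ => hmono _ _
  constructor
  · intro hlt
    by_contra! hno
    exact hlt.ne' (IsLocal.apply_union_eq hloc hmono' hF hG hfin hno)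
  · rintro ⟨g, hg, hlt⟩
    exact hlt.trans_le (hmono' (insert_subset (mem_union_right F hg) subset_union_left))
end

section
/- There exists a linear program in ℝ² with four half-plane constraints {h₁, h₂, h₃, h₄} that is not persistent: specifically, one can choose constraints such that {h₁, h₂} is a basis of {h₁, h₂, h₃, h₄} but h₂ does not belong to the basis of {h₂, h₃, h₄} (i.e., {h₃, h₄} is a basis of {h₂, h₃, h₄}). -/
/-!
Minimise `y` subject to `h₁ : y ≥ 0`, `h₂ : x ≥ 0`, `h₃ : x - y ≤ 1`, `h₄ : -x - y ≤ 1`.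
The full problem and `{h₁, h₂}` both have lexicographic optimum `(0, 0)`, while `{h₂, h₃, h₄}`
and `{h₃, h₄}` both have optimum `(0, -1)`: dropping `h₁` lets the optimum slide down the
cone `h₃ ∧ h₄`, on which `h₂` is no longer tight. Minimality of the two bases holds because
every proper subset of them admits an improving ray, so has no lexicographic optimum at all.
-/

/-- `x` is feasible for the constraints indexed by `S`. -/
def LPFeasible (a : Fin 4 → ℝ × ℝ) (b : Fin 4 → ℝ) (S : Finset (Fin 4)) (x : ℝ × ℝ) : Prop :=
  ∀ i ∈ S, (a i).1 * x.1 + (a i).2 * x.2 ≤ b i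

/-- `x` is the lexicographically minimal minimizer of `cᵀx` over the constraints in `S`:
it is feasible, it minimizes the cost, and among all feasible cost minimizers
it is lexicographically minimal. -/
def IsLexMinOpt (c : ℝ × ℝ) (a : Fin 4 → ℝ × ℝ) (b : Fin 4 → ℝ)
    (S : Finset (Fin 4)) (x : ℝ × ℝ) : Prop :=
  LPFeasible a b S x ∧
  (∀ y, LPFeasible a b S y → c.1 * x.1 + c.2 * x.2 ≤ c.1 * y.1 + c.2 * y.2) ∧
  (∀ y, LPFeasible a b S y → c.1 * y.1 + c.2 * y.2 = c.1 * x.1 + c.2 * x.2 →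
    x.1 < y.1 ∨ (x.1 = y.1 ∧ x.2 ≤ y.2))

theorem Finset.subset_singleton_or_subset_singleton_of_ssubset_pair {α : Type*} [DecidableEq α]
    {s : Finset α} {i j : α} (hs : s ⊂ {i, j}) : s ⊆ {i} ∨ s ⊆ {j} := by
  have hsub (k : α) (hk : k ∈ s) : k = i ∨ k = j := by simpa using hs.subset hk
  by_cases hj : j ∈ s
  · have hi : i ∉ s := fun hi ↦ hs.not_subset (Finset.insert_subset hi (by simpa using hj))
    exact .inr fun k hk ↦ by
      rcases hsub k hk with rfl | rfl
      · exact absurd hk hi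
      · simp
  · exact .inl fun k hk ↦ by
      rcases hsub k hk with rfl | rfl
      · simp
      · exact absurd hk hj

section LexMinOpt

variable {c : ℝ × ℝ} {a : Fin 4 → ℝ × ℝ} {b : Fin 4 → ℝ} {S T : Finset (Fin 4)} {x : ℝ × ℝ}

theorem isLexMinOpt_of_le (hx : LPFeasible a b S x)
    (hcost : ∀ y, LPFeasible a b S y → c.1 * x.1 + c.2 * x.2 ≤ c.1 * y.1 + c.2 * y.2)
    (hle : ∀ y, LPFeasible a b S y → c.1 * y.1 + c.2 * y.2 = c.1 * x.1 + c.2 * x.2 →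
      x.1 ≤ y.1 ∧ x.2 ≤ y.2) :
    IsLexMinOpt c a b S x := by
  refine ⟨hx, hcost, fun y hy hy_cost ↦ ?_⟩
  obtain ⟨h₁, h₂⟩ := hle y hy hy_cost
  exact h₁.lt_or_eq.imp_right fun h ↦ ⟨h, h₂⟩

theorem IsLexMinOpt.mono (hST : S ⊆ T) (hx : IsLexMinOpt c a b S x) (hxT : LPFeasible a b T x) :
    IsLexMinOpt c a b T x :=
  have hfeas (y : ℝ × ℝ) (hy : LPFeasible a b T y) : LPFeasible a b S y :=
    fun i hi ↦ hy i (hST hi)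
  ⟨hxT, fun y hy ↦ hx.2.1 y (hfeas y hy), fun y hy ↦ hx.2.2 y (hfeas y hy)⟩

def IsImprovingDirection (c : ℝ × ℝ) (a : Fin 4 → ℝ × ℝ) (S : Finset (Fin 4)) (d : ℝ × ℝ) :
    Prop :=
  (∀ i ∈ S, (a i).1 * d.1 + (a i).2 * d.2 ≤ 0) ∧
  (c.1 * d.1 + c.2 * d.2 < 0 ∨ (c.1 * d.1 + c.2 * d.2 = 0 ∧ (d.1 < 0 ∨ (d.1 = 0 ∧ d.2 < 0))))

theorem IsImprovingDirection.mono {d : ℝ × ℝ} (hTS : T ⊆ S) (hd : IsImprovingDirection c a S d) :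
    IsImprovingDirection c a T d :=
  ⟨fun i hi ↦ hd.1 i (hTS hi), hd.2⟩

theorem LPFeasible.add_of_recession {d : ℝ × ℝ} (hx : LPFeasible a b S x)
    (hd : ∀ i ∈ S, (a i).1 * d.1 + (a i).2 * d.2 ≤ 0) : LPFeasible a b S (x + d) := by
  intro i hi
  have := hx i hi
  have := hd i hi
  simp only [Prod.fst_add, Prod.snd_add]
  linarith

theorem IsImprovingDirection.not_isLexMinOpt {d : ℝ × ℝ} (hd : IsImprovingDirection c a S d) :
    ¬ IsLexMinOpt c a b S x := by
  rintro ⟨hx, hcost, hlex⟩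
  have hxd := hx.add_of_recession hd.1
  have hcost_xd := hcost _ hxd
  simp only [Prod.fst_add, Prod.snd_add] at hcost_xd
  rcases hd.2 with hdec | ⟨hflat, hneg⟩
  · linarith
  · have := hlex _ hxd (by simp only [Prod.fst_add, Prod.snd_add]; linarith)
    simp only [Prod.fst_add, Prod.snd_add] at this
    rcases hneg with h | ⟨h₁, h₂⟩ <;> rcases this with h' | ⟨h₁', h₂'⟩ <;> linarith

end LexMinOpt

namespace NonPersistentLP

def cost : ℝ × ℝ := (0, 1)

def normal : Fin 4 → ℝ × ℝ := ![(0, -1), (-1, 0), (1, -1), (-1, -1)]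

def offset : Fin 4 → ℝ := ![0, 0, 1, 1]

theorem lpFeasible_pair_01_iff {y : ℝ × ℝ} :
    LPFeasible normal offset {0, 1} y ↔ 0 ≤ y.2 ∧ 0 ≤ y.1 := by
  simp [LPFeasible, normal, offset]

theorem lpFeasible_pair_23_iff {y : ℝ × ℝ} :
    LPFeasible normal offset {2, 3} y ↔ y.1 ≤ 1 + y.2 ∧ -y.1 ≤ 1 + y.2 := by
  simp [LPFeasible, normal, offset]

theorem isLexMinOpt_pair_01 : IsLexMinOpt cost normal offset {0, 1} (0, 0) := by
  refine isLexMinOpt_of_le (lpFeasible_pair_01_iff.2 ⟨le_rfl, le_rfl⟩) (fun y hy ↦ ?_)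
    (fun y hy _ ↦ ?_) <;> rw [lpFeasible_pair_01_iff] at hy <;> simp [cost, hy]

theorem isLexMinOpt_pair_23 : IsLexMinOpt cost normal offset {2, 3} (0, -1) := by
  refine isLexMinOpt_of_le (lpFeasible_pair_23_iff.2 ⟨by norm_num, by norm_num⟩) (fun y hy ↦ ?_)
    (fun y hy hy_cost ↦ ?_) <;> rw [lpFeasible_pair_23_iff] at hy <;> simp only [cost] at *
  · linarith
  · constructor <;> linarith

theorem isLexMinOpt_all : IsLexMinOpt cost normal offset {0, 1, 2, 3} (0, 0) :=
  isLexMinOpt_pair_01.mono (by decide) (by simp [LPFeasible, normal, offset])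

theorem isLexMinOpt_123 : IsLexMinOpt cost normal offset {1, 2, 3} (0, -1) :=
  isLexMinOpt_pair_23.mono (by decide) (by simp [LPFeasible, normal, offset])

theorem isImprovingDirection_0 : IsImprovingDirection cost normal {0} (-1, 0) := by
  simp [IsImprovingDirection, normal, cost]

theorem isImprovingDirection_1 : IsImprovingDirection cost normal {1} (0, -1) := by
  simp [IsImprovingDirection, normal, cost]

theorem isImprovingDirection_2 : IsImprovingDirection cost normal {2} (-1, -1) := by
  simp [IsImprovingDirection, normal, cost]

theorem isImprovingDirection_3 : IsImprovingDirection cost normal {3} (1, -1) := by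
  simp [IsImprovingDirection, normal, cost]

theorem not_isLexMinOpt_of_ssubset_pair_01 {T : Finset (Fin 4)} (hT : T ⊂ {0, 1})
    (y : ℝ × ℝ) : ¬ IsLexMinOpt cost normal offset T y := by
  rcases Finset.subset_singleton_or_subset_singleton_of_ssubset_pair hT with h | h
  · exact (isImprovingDirection_0.mono h).not_isLexMinOpt
  · exact (isImprovingDirection_1.mono h).not_isLexMinOpt

theorem not_isLexMinOpt_of_ssubset_pair_23 {T : Finset (Fin 4)} (hT : T ⊂ {2, 3})
    (y : ℝ × ℝ) : ¬ IsLexMinOpt cost normal offset T y := by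
  rcases Finset.subset_singleton_or_subset_singleton_of_ssubset_pair hT with h | h
  · exact (isImprovingDirection_2.mono h).not_isLexMinOpt
  · exact (isImprovingDirection_3.mono h).not_isLexMinOpt

end NonPersistentLP

/-- There exists a linear program in `ℝ²` with four half-plane constraints that is
not persistent: `{h₁, h₂}` is a basis of `{h₁, h₂, h₃, h₄}`, but `{h₃, h₄}` is a
basis of `{h₂, h₃, h₄}`, i.e. `h₂` does not belong to the basis of `{h₂, h₃, h₄}`. -/
theorem exists_non_persistent_linear_program :
    ∃ (c : ℝ × ℝ) (a : Fin 4 → ℝ × ℝ) (b : Fin 4 → ℝ) (x₁₂ x₃₄ : ℝ × ℝ),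
      -- {h₁,h₂} is a basis of the full problem {h₁,h₂,h₃,h₄}
      IsLexMinOpt c a b {0, 1, 2, 3} x₁₂ ∧
      IsLexMinOpt c a b {0, 1} x₁₂ ∧
      (∀ T ⊂ ({0, 1} : Finset (Fin 4)), ∀ y, IsLexMinOpt c a b T y → y ≠ x₁₂) ∧
      -- {h₃,h₄} is a basis of {h₂,h₃,h₄}, so h₂ is not in the basis of {h₂,h₃,h₄}
      IsLexMinOpt c a b {1, 2, 3} x₃₄ ∧
      IsLexMinOpt c a b {2, 3} x₃₄ ∧
      (∀ T ⊂ ({2, 3} : Finset (Fin 4)), ∀ y, IsLexMinOpt c a b T y → y ≠ x₃₄) ∧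
      x₁₂ ≠ x₃₄ :=
  ⟨NonPersistentLP.cost, NonPersistentLP.normal, NonPersistentLP.offset, (0, 0), (0, -1),
    NonPersistentLP.isLexMinOpt_all, NonPersistentLP.isLexMinOpt_pair_01,
    fun _ hT y hy ↦ absurd hy (NonPersistentLP.not_isLexMinOpt_of_ssubset_pair_01 hT y),
    NonPersistentLP.isLexMinOpt_123, NonPersistentLP.isLexMinOpt_pair_23,
    fun _ hT y hy ↦ absurd hy (NonPersistentLP.not_isLexMinOpt_of_ssubset_pair_23 hT y),
    by simp [Prod.ext_iff]⟩
end

section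
/- Under the constraints consensus algorithm on a jointly strongly connected time-dependent digraph, once all candidate bases have converged to their limiting values B¹, …, Bⁿ, all nodes share the same value: φ(B^i) = φ(B^j) for all i, j ∈ {1, …, n}. -/
/-- `B` is a basis of `G`: a minimal subset of `G` with finite value equal to `φ(G)`. -/
def IsBasisOf {α : Type*} [DecidableEq α] {Φ : Type*} [LinearOrder Φ] [OrderBot Φ]
    (φ : Finset α → Φ) (B G : Finset α) : Prop :=
  B ⊆ G ∧ ⊥ < φ B ∧ φ B = φ G ∧ ∀ B' ⊂ B, φ B' < φ B

/-!
After convergence, the update rule says that `B^a` is a basis of a set containing `B^b` for every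
in-neighbour `b` of `a`, so by monotonicity `φ(B^b) ≤ φ(B^a)`: values can only grow along edges
used after time `T`. Joint strong connectivity from time `T` gives such paths in both directions
between any two nodes.
-/

theorem IsBasisOf.le_of_subset {α Φ : Type*} [DecidableEq α] [LinearOrder Φ] [OrderBot Φ]
    {φ : Finset α → Φ} (hmono : Monotone φ) {B G F : Finset α} (hB : IsBasisOf φ B G)
    (hF : F ⊆ G) : φ F ≤ φ B :=
  (hmono hF).trans_eq hB.2.2.1.symm

theorem Relation.ReflTransGen.le_of_forall_rel_le {ι β : Type*} [Preorder β] {r : ι → ι → Prop}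
    {f : ι → β} (hr : ∀ a b, r a b → f a ≤ f b) {i j : ι} (hij : Relation.ReflTransGen r i j) :
    f i ≤ f j := by
  simpa only [Relation.reflTransGen_eq_self] using hij.lift f hr

theorem value_le_of_inNeighbor_of_stable {α Φ : Type*} [DecidableEq α] [LinearOrder Φ] [OrderBot Φ]
    {φ : Finset α → Φ} (hmono : Monotone φ) {n : ℕ} (h : Fin n → α)
    (Nin : ℕ → Fin n → Fin n → Bool) (B : ℕ → Fin n → Finset α) (τ : ℕ) (a b : Fin n)
    (hupd : IsBasisOf φ (B (τ + 1) a)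
      (insert (h a) (B τ a ∪ (Finset.univ.filter (fun j => Nin τ a j = true)).biUnion (B τ))))
    (hstable : B (τ + 1) = B τ) (hab : Nin τ a b = true) :
    φ (B τ b) ≤ φ (B τ a) := by
  rw [hstable] at hupd
  refine hupd.le_of_subset hmono fun x hx => ?_
  exact Finset.mem_insert_of_mem <| Finset.mem_union_right _ <|
    Finset.mem_biUnion.mpr ⟨b, Finset.mem_filter.mpr ⟨Finset.mem_univ b, hab⟩, hx⟩

theorem constraints_consensus_limit_values_agree_general
    {α : Type*} [DecidableEq α] {Φ : Type*} [LinearOrder Φ] [OrderBot Φ]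
    (φ : Finset α → Φ)
    (hmono : ∀ F G : Finset α, F ⊆ G → φ F ≤ φ G)
    (n : ℕ) (h : Fin n → α)
    (Nin : ℕ → Fin n → Fin n → Bool)
    (hconn : ∀ (t : ℕ) (i j : Fin n),
      Relation.ReflTransGen (fun a b => ∃ τ, t ≤ τ ∧ Nin τ b a = true) i j)
    (B : ℕ → Fin n → Finset α)
    (hupd : ∀ (t : ℕ) (i : Fin n),
      IsBasisOf φ (B (t+1) i)
        (insert (h i) (B t i ∪
          (Finset.univ.filter (fun j => Nin t i j = true)).biUnion (B t))))
    -- the candidate bases have converged to their limiting values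
    (Blim : Fin n → Finset α) (T : ℕ)
    (hconv : ∀ t, T ≤ t → ∀ i, B t i = Blim i) :
    ∀ i j : Fin n, φ (Blim i) = φ (Blim j) := by
  have hlim : ∀ τ, T ≤ τ → B τ = Blim := fun τ hτ => funext (hconv τ hτ)
  have hedge : ∀ a b, (∃ τ, T ≤ τ ∧ Nin τ b a = true) → φ (Blim a) ≤ φ (Blim b) := by
    rintro a b ⟨τ, hτ, hba⟩
    have hle := value_le_of_inNeighbor_of_stable (fun _ _ => hmono _ _) h Nin B τ b a (hupd τ b)
      ((hlim (τ + 1) (by omega)).trans (hlim τ hτ).symm) hba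
    rwa [hlim τ hτ] at hle
  intro i j
  exact le_antisymm ((hconn T i j).le_of_forall_rel_le hedge) ((hconn T j i).le_of_forall_rel_le hedge)

/-- Once the constraints consensus algorithm has converged to limiting bases
`B¹, …, Bⁿ` on a jointly strongly connected time-dependent digraph, all nodes
share the same basis value: `φ(B^i) = φ(B^j)` for all nodes `i, j`. -/
theorem constraints_consensus_limit_values_agree
    {α : Type*} [DecidableEq α] {Φ : Type*} [LinearOrder Φ] [OrderBot Φ]
    (φ : Finset α → Φ)
    (hmono : ∀ F G : Finset α, F ⊆ G → φ F ≤ φ G)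
    (hloc : ∀ F G : Finset α, F ⊆ G → ⊥ < φ F → φ F = φ G →
      ∀ h : α, φ G < φ (insert h G) → φ F < φ (insert h F))
    (n : ℕ) (hn : 0 < n) (h : Fin n → α)
    (Nin : ℕ → Fin n → Fin n → Bool)
    (hconn : ∀ (t : ℕ) (i j : Fin n),
      Relation.ReflTransGen (fun a b => ∃ τ, t ≤ τ ∧ Nin τ b a = true) i j)
    (B : ℕ → Fin n → Finset α)
    (hupd : ∀ (t : ℕ) (i : Fin n),
      IsBasisOf φ (B (t+1) i)
        (insert (h i) (B t i ∪
          (Finset.univ.filter (fun j => Nin t i j = true)).biUnion (B t))))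
    -- the candidate bases have converged to their limiting values
    (Blim : Fin n → Finset α) (T : ℕ)
    (hconv : ∀ t, T ≤ t → ∀ i, B t i = Blim i) :
    ∀ i j : Fin n, φ (Blim i) = φ (Blim j) :=
  constraints_consensus_limit_values_agree_general φ hmono n h Nin hconn B hupd Blim T hconv
end

section
/- Let B¹, …, Bⁿ ⊆ H be the limiting candidate bases of the constraints consensus algorithm on a jointly strongly connected digraph, and suppose that for every edge (i,j) of the limit graph, φ(B^i ∪ B^j) = φ(B^j) = φ̄ for a common value φ̄. Then φ̄ = φ(B¹ ∪ ⋯ ∪ Bⁿ). -/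
/-! For a set `F` of finite value, locality shows that `φ (F ∪ G) = φ F` exactly when no
single element of `G` raises the value of `F`. Hence "`B^i ∪ B^j` has value `φ̄`" is an equivalence
relation on the nodes; it contains the edges, so by connectivity it relates a fixed node `i₀` to every
node, and then no element of any `B^j` raises the value of `B^{i₀}`. -/

namespace Finset

variable {α Φ : Type*} [DecidableEq α] [LinearOrder Φ] [OrderBot Φ]

/-- The locality axiom of an abstract optimization program. -/
def IsLocal (φ : Finset α → Φ) : Prop :=
  ∀ F G : Finset α, F ⊆ G → ⊥ < φ F → φ F = φ G →
    ∀ h : α, φ G < φ (insert h G) → φ F < φ (insert h F)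

variable {φ : Finset α → Φ} {F G H : Finset α}

theorem value_union_eq_iff (hmono : Monotone φ) (hloc : IsLocal φ) (hF : ⊥ < φ F) :
    φ (F ∪ G) = φ F ↔ ∀ g ∈ G, φ (insert g F) = φ F := by
  refine ⟨fun hG g hg => le_antisymm ?_ (hmono (subset_insert g F)), fun h => ?_⟩
  · exact hG ▸ hmono (insert_subset (mem_union_right F hg) subset_union_left)
  induction G using Finset.induction_on with
  | empty => rw [union_empty]
  | insert g G _ ih =>
    have hG : φ (F ∪ G) = φ F := ih fun x hx => h x (mem_insert_of_mem hx)
    rw [union_insert]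
    -- an increase by `g` over `F ∪ G` would, by locality, be an increase by `g` over `F`
    refine le_antisymm (not_lt.mp fun hlt => ?_) (hmono (subset_union_left.trans (subset_insert _ _)))
    exact (h g (mem_insert_self g G)).not_gt (hloc F (F ∪ G) subset_union_left hF hG.symm g (hG ▸ hlt))

theorem value_union_union_eq (hmono : Monotone φ) (hloc : IsLocal φ) (hF : ⊥ < φ F)
    (hG : φ (F ∪ G) = φ F) (hH : φ (F ∪ H) = φ F) : φ (F ∪ (G ∪ H)) = φ F := by
  rw [value_union_eq_iff hmono hloc hF] at hG hH ⊢
  intro g hg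
  exact (mem_union.mp hg).elim (hG g) (hH g)

theorem value_union_biUnion_eq {ι : Type*} [DecidableEq ι] (hmono : Monotone φ) (hloc : IsLocal φ)
    (hF : ⊥ < φ F) {B : ι → Finset α} {s : Finset ι} (hB : ∀ i ∈ s, φ (F ∪ B i) = φ F) :
    φ (F ∪ s.biUnion B) = φ F := by
  simp only [value_union_eq_iff hmono hloc hF, mem_biUnion, forall_exists_index, and_imp] at hB ⊢
  exact fun g i hi hg => hB i hi g hg

theorem equivalence_value_union_eq (hmono : Monotone φ) (hloc : IsLocal φ) {ι : Type*}
    {B : ι → Finset α} {c : Φ} (hc : ⊥ < c) (hB : ∀ i, φ (B i) = c) :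
    Equivalence fun i j => φ (B i ∪ B j) = c where
  refl i := by rw [union_self, hB i]
  symm h := by rwa [union_comm]
  trans {i j k} hij hjk := by
    have hjik : φ (B j ∪ (B i ∪ B k)) = φ (B j) :=
      value_union_union_eq hmono hloc (hB j ▸ hc) (by rw [union_comm, hij, hB j])
        (by rw [hjk, hB j])
    refine le_antisymm ?_ (hB i ▸ hmono subset_union_left)
    exact hB j ▸ hjik ▸ hmono subset_union_right

end Finset

open Finset in
/-- If subsets `B¹, …, Bⁿ ⊆ H` indexed by the nodes of a weakly connected graph
all have common finite value `φ̄`, and `φ(B^i ∪ B^j) = φ̄` for every edge `(i,j)`,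
then the union of all the sets also has value `φ̄`. -/
theorem value_of_union_of_limit_bases
    {α : Type*} [DecidableEq α] {Φ : Type*} [LinearOrder Φ] [OrderBot Φ]
    (φ : Finset α → Φ)
    (hmono : ∀ F G : Finset α, F ⊆ G → φ F ≤ φ G)
    (hloc : ∀ F G : Finset α, F ⊆ G → ⊥ < φ F → φ F = φ G →
      ∀ h : α, φ G < φ (insert h G) → φ F < φ (insert h F))
    (n : ℕ) (hn : 0 < n)
    (adj : Fin n → Fin n → Prop)
    -- weak connectivity: any node reaches any other through undirected edges
    (hconn : ∀ i j : Fin n, Relation.ReflTransGen (fun a b => adj a b ∨ adj b a) i j)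
    (B : Fin n → Finset α) (φbar : Φ) (hfin : ⊥ < φbar)
    (hval : ∀ i, φ (B i) = φbar)
    (hedge : ∀ i j, adj i j → φ (B i ∪ B j) = φbar) :
    φ (Finset.univ.biUnion B) = φbar := by
  have hmono' : Monotone φ := fun F G => hmono F G
  have hequiv := equivalence_value_union_eq hmono' hloc hfin hval
  have hpair (i j : Fin n) : φ (B i ∪ B j) = φbar :=
    Relation.reflTransGen_le_of_equivalence_of_le hequiv
      (fun a b hab => hab.elim (hedge a b) fun hba => hequiv.symm (hedge b a hba)) i j (hconn i j)
  let i₀ : Fin n := ⟨0, hn⟩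
  have hunion : φ (B i₀ ∪ univ.biUnion B) = φ (B i₀) :=
    value_union_biUnion_eq hmono' hloc (hval i₀ ▸ hfin) fun j _ => (hpair i₀ j).trans (hval i₀).symm
  rwa [union_eq_right.mpr (subset_biUnion_of_mem B (mem_univ i₀)), hval i₀] at hunion
end
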